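/- (Compactness) Let L be a bounded lattice, X = D♭(L), and let e : L → C(X) = MPE(X,2) be the embedding a ↦ e_a. If A, B ⊆ L are such that ⋀{e_a : a ∈ A} ≤ ⋁{e_b : b ∈ B} in C(X), then there exist finite subsets A' ⊆ A and B' ⊆ B such that ⋀{e_a : a ∈ A'} ≤ ⋁{e_b : b ∈ B'}; that is, the completion (e, C(X)) of L is compact. -/

import Mathlib

namespace CanExt

open Classical

/-- A partial map from `X` into the two-element chain `{0,1}` (encoded as `Bool`,
with `false` playing the role of `0` and `true` the role of `1`);
`φ x = none` means `x` is outside the domain of `φ`. -/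
abbrev PMap (X : Type*) := X → Option Bool

/-- The preimage of `1` of a partial map. -/
def pre1 {X : Type*} (φ : PMap X) : Set X := {x | φ x = some true}

/-- The preimage of `0` of a partial map. -/
def pre0 {X : Type*} (φ : PMap X) : Set X := {x | φ x = some false}

/-- A partial map is `E`-preserving if whenever `x, y` lie in its domain and
`(x,y) ∈ E`, then `φ x ≤ φ y`. -/
def EPres {X : Type*} (E : X → X → Prop) (φ : PMap X) : Prop :=
  ∀ ⦃x y : X⦄, E x y → ∀ ⦃a b : Bool⦄, φ x = some a → φ y = some b → a ≤ b

/-- `PExt ψ φ` : the partial map `ψ` extends the partial map `φ`. -/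
def PExt {X : Type*} (ψ φ : PMap X) : Prop :=
  ∀ ⦃x : X⦄ ⦃a : Bool⦄, φ x = some a → ψ x = some a

/-- The set of maximal partial `E`-preserving maps from `(X,E)` into the
two-element chain `2`. -/
def MPE {X : Type*} (E : X → X → Prop) : Set (PMap X) :=
  {φ | EPres E φ ∧ ∀ ψ : PMap X, EPres E ψ → PExt ψ φ → ψ = φ}

/-- A partial morphism from a graph with topology `(X,E,t)` to `2_τ`:
the preimages of `1` and `0` are `t`-closed (equivalently, the domain is
closed and the restriction to the domain is continuous into discrete `2`),
and the map is `E`-preserving. -/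
def PMorphT {X : Type*} (E : X → X → Prop) (t : TopologicalSpace X) (φ : PMap X) : Prop :=
  EPres E φ ∧ @IsClosed X t (pre1 φ) ∧ @IsClosed X t (pre0 φ)

/-- The set of maximal partial morphisms from `(X,E,t)` to `2_τ`. -/
def MPM {X : Type*} (E : X → X → Prop) (t : TopologicalSpace X) : Set (PMap X) :=
  {φ | PMorphT E t φ ∧ ∀ ψ : PMap X, PMorphT E t ψ → PExt ψ φ → ψ = φ}

/-- The relation `E` between partial maps on a lattice `L`:
`(f,g) ∈ E` iff `f x ≤ g x` for all `x ∈ dom f ∩ dom g`. -/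
def ErelP {L : Type*} (f g : PMap L) : Prop :=
  ∀ ⦃x : L⦄ ⦃a b : Bool⦄, f x = some a → g x = some b → a ≤ b

/-- `f ≤₁ g` iff `f⁻¹(1) ⊆ g⁻¹(1)`. -/
def le1 {L : Type*} (f g : PMap L) : Prop := pre1 f ⊆ pre1 g

/-- `f ≤₂ g` iff `f⁻¹(0) ⊆ g⁻¹(0)`. -/
def le2 {L : Type*} (f g : PMap L) : Prop := pre0 f ⊆ pre0 g

section Lat

variable (L : Type*) [Lattice L] [BoundedOrder L]

/-- A partial homomorphism from a bounded lattice `L` to the two-element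
bounded lattice `2_B`: its domain is a `{0,1}`-sublattice of `L` and the
restriction to the domain is a bounded-lattice homomorphism. -/
def PHom (f : PMap L) : Prop :=
  f ⊥ = some false ∧ f ⊤ = some true ∧
  ∀ ⦃a b : L⦄ ⦃x y : Bool⦄, f a = some x → f b = some y →
    f (a ⊓ b) = some (x ⊓ y) ∧ f (a ⊔ b) = some (x ⊔ y)

/-- The set of maximal partial homomorphisms (MPHs) from `L` to `2_B`. -/
def MPHset : Set (PMap L) := {f | PHom L f ∧ ∀ g : PMap L, PHom L g → PExt g f → g = f}

/-- The underlying set of the graph `D♭(L)`. -/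
abbrev MPHsub := {f : PMap L // f ∈ MPHset L}

/-- The relation `E` on `MPH(L, 2_B)`, giving the graph `D♭(L)`. -/
def EM (f g : MPHsub L) : Prop := ErelP f.1 g.1

/-- The evaluation map `e_a` on `MPH(L,2_B)` : `e_a(f) = f(a)` if `a ∈ dom f`. -/
def evalM (a : L) : PMap (MPHsub L) := fun f => f.1 a

/-- `V_a = {f ∈ MPH(L,2_B) : f(a) = 0}`. -/
def VaM (a : L) : Set (MPHsub L) := {f | f.1 a = some false}

/-- `W_a = {f ∈ MPH(L,2_B) : f(a) = 1}`. -/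
def WaM (a : L) : Set (MPHsub L) := {f | f.1 a = some true}

/-- The topology on `MPH(L,2_B)` with the sets `V_a`, `W_a` as a subbasis of
closed sets. -/
def tauM : TopologicalSpace (MPHsub L) :=
  TopologicalSpace.generateFrom {U | ∃ a : L, U = (VaM L a)ᶜ ∨ U = (WaM L a)ᶜ}

/-- A (nonempty) lattice filter. -/
def IsLatFilter (F : Set L) : Prop :=
  F.Nonempty ∧ (∀ ⦃a b : L⦄, a ∈ F → a ≤ b → b ∈ F) ∧
    (∀ ⦃a b : L⦄, a ∈ F → b ∈ F → a ⊓ b ∈ F)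

/-- A (nonempty) lattice ideal. -/
def IsLatIdeal (I : Set L) : Prop :=
  I.Nonempty ∧ (∀ ⦃a b : L⦄, a ∈ I → b ≤ a → b ∈ I) ∧
    (∀ ⦃a b : L⦄, a ∈ I → b ∈ I → a ⊔ b ∈ I)

/-- The set of special partial homomorphisms (SPHs) from `L` to `2_B`:
`f⁻¹(1)` is a nonempty filter, `f⁻¹(0)` is a nonempty ideal, and they are
disjoint. -/
def SPHset : Set (PMap L) :=
  {f | IsLatFilter L (pre1 f) ∧ IsLatIdeal L (pre0 f) ∧ Disjoint (pre1 f) (pre0 f)}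

/-- The underlying set of the graph `D̄♭(L)`. -/
abbrev SPHsub := {f : PMap L // f ∈ SPHset L}

/-- The relation `E` on `SPH(L, 2_B)`, giving the graph `D̄♭(L)`. -/
def ES (f g : SPHsub L) : Prop := ErelP f.1 g.1

/-- The evaluation map `ē_a` on `SPH(L,2_B)`. -/
def evalS (a : L) : PMap (SPHsub L) := fun f => f.1 a

/-- `V_a = {f ∈ SPH(L,2_B) : f(a) = 0}`. -/
def VaS (a : L) : Set (SPHsub L) := {f | f.1 a = some false}

/-- `W_a = {f ∈ SPH(L,2_B) : f(a) = 1}`. -/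
def WaS (a : L) : Set (SPHsub L) := {f | f.1 a = some true}

/-- The topology on `SPH(L,2_B)` with the sets `V_a`, `W_a` as a subbasis of
closed sets. -/
def tauS : TopologicalSpace (SPHsub L) :=
  TopologicalSpace.generateFrom {U | ∃ a : L, U = (VaS L a)ᶜ ∨ U = (WaS L a)ᶜ}

/-- The carrier of the completion built from `D♭(L)`. -/
abbrev CX := {φ : PMap (MPHsub L) // φ ∈ MPE (EM L)}

/-- The carrier of the completion built from `D̄♭(L)`. -/
abbrev CY := {φ : PMap (SPHsub L) // φ ∈ MPE (ES L)}

end Lat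

/-!
A maximal partial `E`-preserving map `φ` on a reflexive graph `(X, E)` is the same thing as a
formal concept `(φ⁻¹(1), φ⁻¹(0))` of the relation `¬E`, so `C(X)` is a concept lattice, in which
`⋀ Φ ≤ ⋁ Ψ` means that no `x` in the `1`-sets of all of `Φ` is `E`-related to a `y` in the
`0`-sets of all of `Ψ`. For `X = D♭(L)` the `1`-set of an MPH is a filter and its `0`-set an
ideal, so by Zorn such `x E y` merge into one MPH sending `A` to `1` and `B` to `0`. Hence
`⋀ e(A) ≤ ⋁ e(B)` fails iff the filter generated by `A` misses the ideal generated by `B`, and a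
meeting point of the two is witnessed by finitely many elements of `A` and `B`.
-/

section PartialMaps

variable {X : Type*} {φ ψ χ : PMap X}

lemma PExt.refl (φ : PMap X) : PExt φ φ := fun _ _ h => h

lemma PExt.trans (h₁ : PExt χ ψ) (h₂ : PExt ψ φ) : PExt χ φ := fun _ _ h => h₁ (h₂ h)

lemma pExt_iff : PExt ψ φ ↔ pre1 φ ⊆ pre1 ψ ∧ pre0 φ ⊆ pre0 ψ :=
  ⟨fun h => ⟨fun _ hx => h hx, fun _ hx => h hx⟩,
    fun h x a hx => by cases a; exacts [h.2 hx, h.1 hx]⟩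

lemma PExt.antisymm (h₁ : PExt ψ φ) (h₂ : PExt φ ψ) : ψ = φ := by
  funext x
  cases hφ : φ x with
  | some a => exact h₁ hφ
  | none =>
    cases hψ : ψ x with
    | none => rfl
    | some a => simpa [hφ] using h₂ hψ

lemma ext_pre (h₁ : pre1 φ = pre1 ψ) (h₀ : pre0 φ = pre0 ψ) : φ = ψ :=
  PExt.antisymm (pExt_iff.2 ⟨h₁.ge, h₀.ge⟩) (pExt_iff.2 ⟨h₁.le, h₀.le⟩)

lemma disjoint_pre1_pre0 (φ : PMap X) : Disjoint (pre1 φ) (pre0 φ) :=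
  Set.disjoint_left.2 fun x (h₁ : φ x = _) (h₀ : φ x = _) => by simp [h₁] at h₀

noncomputable def pairMap (S T : Set X) : PMap X := fun x =>
  if x ∈ S then some true else if x ∈ T then some false else none

lemma pre1_pairMap (S T : Set X) : pre1 (pairMap S T) = S := by
  ext x
  by_cases hS : x ∈ S <;> simp [pre1, pairMap, hS]

lemma pre0_pairMap {S T : Set X} (h : Disjoint S T) : pre0 (pairMap S T) = T := by
  ext x
  by_cases hS : x ∈ S
  · simp [pre0, pairMap, hS, Set.disjoint_left.1 h hS]
  · by_cases hT : x ∈ T <;> simp [pre0, pairMap, hS, hT]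

lemma pairMap_pre1_pre0 (φ : PMap X) : pairMap (pre1 φ) (pre0 φ) = φ :=
  ext_pre (pre1_pairMap _ _) (pre0_pairMap (disjoint_pre1_pre0 φ))

lemma erelP_iff : ErelP φ ψ ↔ Disjoint (pre1 φ) (pre0 ψ) := by
  refine ⟨fun h => Set.disjoint_left.2 fun x h₁ h₀ => absurd (h h₁ h₀) (by decide), ?_⟩
  intro h x a b ha hb
  cases a <;> cases b
  all_goals first | decide | exact absurd hb (Set.disjoint_left.1 h ha)

end PartialMaps

section ChainUnion

variable {X : Type*} {C : Set (PMap X)}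

noncomputable def chainUnion (C : Set (PMap X)) : PMap X :=
  pairMap (⋃ φ ∈ C, pre1 φ) (⋃ φ ∈ C, pre0 φ)

lemma disjoint_iUnion_pre1_iUnion_pre0 (hC : IsChain (fun φ ψ => PExt ψ φ) C) :
    Disjoint (⋃ φ ∈ C, pre1 φ) (⋃ φ ∈ C, pre0 φ) := by
  simp only [Set.disjoint_iUnion_left, Set.disjoint_iUnion_right]
  intro ψ hψ φ hφ
  rcases eq_or_ne φ ψ with rfl | hne
  · exact disjoint_pre1_pre0 φ
  rcases hC hφ hψ hne with h | h
  · exact (disjoint_pre1_pre0 ψ).mono_left (pExt_iff.1 h).1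
  · exact (disjoint_pre1_pre0 φ).mono_right (pExt_iff.1 h).2

lemma pExt_chainUnion (hC : IsChain (fun φ ψ => PExt ψ φ) C) {φ : PMap X} (hφ : φ ∈ C) :
    PExt (chainUnion C) φ := by
  rw [pExt_iff, chainUnion, pre1_pairMap, pre0_pairMap (disjoint_iUnion_pre1_iUnion_pre0 hC)]
  exact ⟨Set.subset_biUnion_of_mem hφ, Set.subset_biUnion_of_mem hφ⟩

lemma exists_of_chainUnion_eq_some (hC : IsChain (fun φ ψ => PExt ψ φ) C) {x : X} {a : Bool}
    (h : chainUnion C x = some a) : ∃ φ ∈ C, φ x = some a := by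
  cases a
  · have hx : x ∈ pre0 (chainUnion C) := h
    rw [chainUnion, pre0_pairMap (disjoint_iUnion_pre1_iUnion_pre0 hC)] at hx
    obtain ⟨φ, hφ, hφx⟩ := Set.mem_iUnion₂.1 hx
    exact ⟨φ, hφ, hφx⟩
  · have hx : x ∈ pre1 (chainUnion C) := h
    rw [chainUnion, pre1_pairMap] at hx
    obtain ⟨φ, hφ, hφx⟩ := Set.mem_iUnion₂.1 hx
    exact ⟨φ, hφ, hφx⟩

end ChainUnion

section MaximalEPreserving

variable {X : Type*} {E : X → X → Prop} {φ : PMap X}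

lemma ePres_iff : EPres E φ ↔ pre0 φ ⊆ upperPolar Eᶜ (pre1 φ) := by
  refine ⟨fun h y hy x hx hxy => absurd (h hxy hx hy) (by decide), fun h x y hxy a b ha hb => ?_⟩
  cases a <;> cases b
  all_goals first | decide | exact absurd hxy (h hb ha)

lemma mem_MPE_of_polar (h₀ : upperPolar Eᶜ (pre1 φ) = pre0 φ)
    (h₁ : lowerPolar Eᶜ (pre0 φ) = pre1 φ) : φ ∈ MPE E := by
  refine ⟨ePres_iff.2 h₀.ge, fun ψ hψ hext => ?_⟩
  obtain ⟨hext₁, hext₀⟩ := pExt_iff.1 hext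
  refine ext_pre (hext₁.antisymm' ?_) (hext₀.antisymm' ?_)
  · calc pre1 ψ ⊆ lowerPolar Eᶜ (pre0 ψ) :=
          subset_upperPolar_iff_subset_lowerPolar.1 (ePres_iff.1 hψ)
      _ ⊆ lowerPolar Eᶜ (pre0 φ) := lowerPolar_anti _ hext₀
      _ = pre1 φ := h₁
  · calc pre0 ψ ⊆ upperPolar Eᶜ (pre1 ψ) := ePres_iff.1 hψ
      _ ⊆ upperPolar Eᶜ (pre1 φ) := upperPolar_anti _ hext₁
      _ = pre0 φ := h₀

variable [Std.Refl E]

lemma disjoint_of_forall_not_rel {S T : Set X} (h : ∀ x ∈ S, ∀ y ∈ T, ¬ E x y) : Disjoint S T :=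
  Set.disjoint_left.2 fun x hS hT => h x hS x hT (refl x)

lemma upperPolar_pre1_of_mem_MPE (hφ : φ ∈ MPE E) : upperPolar Eᶜ (pre1 φ) = pre0 φ := by
  have hdisj : Disjoint (pre1 φ) (upperPolar Eᶜ (pre1 φ)) :=
    disjoint_of_forall_not_rel fun x hx y hy => hy hx
  have hsat := hφ.2 (pairMap (pre1 φ) (upperPolar Eᶜ (pre1 φ)))
    (ePres_iff.2 (by rw [pre0_pairMap hdisj, pre1_pairMap]))
    (pExt_iff.2 ⟨(pre1_pairMap _ _).ge, (pre0_pairMap hdisj).ge.trans' (ePres_iff.1 hφ.1)⟩)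
  have h₀ := pre0_pairMap hdisj
  rw [hsat] at h₀
  exact h₀.symm

lemma lowerPolar_pre0_of_mem_MPE (hφ : φ ∈ MPE E) : lowerPolar Eᶜ (pre0 φ) = pre1 φ := by
  have hdisj : Disjoint (lowerPolar Eᶜ (pre0 φ)) (pre0 φ) :=
    disjoint_of_forall_not_rel fun x hx y hy => hx hy
  have hsat := hφ.2 (pairMap (lowerPolar Eᶜ (pre0 φ)) (pre0 φ))
    (ePres_iff.2 <| by
      rw [pre0_pairMap hdisj, pre1_pairMap]; exact subset_upperPolar_lowerPolar _ _)
    (pExt_iff.2 ⟨(pre1_pairMap _ _).ge.trans'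
        (subset_upperPolar_iff_subset_lowerPolar.1 (ePres_iff.1 hφ.1)),
      (pre0_pairMap hdisj).ge⟩)
  have h₁ := pre1_pairMap (lowerPolar Eᶜ (pre0 φ)) (pre0 φ)
  rw [hsat] at h₁
  exact h₁.symm

instance : Std.Irrefl Eᶜ := ⟨fun x h => h (refl x)⟩

noncomputable def MPE.equivConcept : MPE E ≃ Concept X X Eᶜ where
  toFun φ := ⟨pre1 φ.1, pre0 φ.1, upperPolar_pre1_of_mem_MPE φ.2, lowerPolar_pre0_of_mem_MPE φ.2⟩
  invFun c := ⟨pairMap c.extent c.intent, mem_MPE_of_polar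
    (by rw [pre1_pairMap, pre0_pairMap Concept.disjoint_extent_intent, c.upperPolar_extent])
    (by rw [pre1_pairMap, pre0_pairMap Concept.disjoint_extent_intent, c.lowerPolar_intent])⟩
  left_inv φ := Subtype.ext (pairMap_pre1_pre0 φ.1)
  right_inv c := Concept.ext (pre1_pairMap _ _)

/-- Not an instance: the subtype `MPE E` already inherits the pointwise order of
`X → Option Bool`, which is a different one. -/
noncomputable abbrev MPE.completeLattice : CompleteLattice (MPE E) :=
  MPE.equivConcept.completeLattice

lemma MPE.le_iff {φ ψ : MPE E} : MPE.completeLattice.le φ ψ ↔ pre1 φ.1 ⊆ pre1 ψ.1 := Iff.rfl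

lemma MPE.pre1_sInf (S : Set (MPE E)) :
    pre1 (MPE.completeLattice.sInf S).1 = ⋂ φ ∈ S, pre1 φ.1 := by
  change pre1 (pairMap _ _) = _
  rw [pre1_pairMap]
  simp [MPE.equivConcept]

lemma MPE.pre0_sSup (S : Set (MPE E)) :
    pre0 (MPE.completeLattice.sSup S).1 = ⋂ φ ∈ S, pre0 φ.1 := by
  change pre0 (pairMap _ _) = _
  rw [pre0_pairMap Concept.disjoint_extent_intent]
  simp [MPE.equivConcept]

lemma MPE.sInf_le_sSup_iff {S T : Set (MPE E)} :
    MPE.completeLattice.le (MPE.completeLattice.sInf S) (MPE.completeLattice.sSup T) ↔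
      ∀ x y, (∀ φ ∈ S, x ∈ pre1 φ.1) → (∀ ψ ∈ T, y ∈ pre0 ψ.1) → ¬ E x y := by
  rw [MPE.le_iff, MPE.pre1_sInf, ← lowerPolar_pre0_of_mem_MPE (MPE.completeLattice.sSup T).2,
    MPE.pre0_sSup]
  simp only [Set.subset_def, Set.mem_iInter₂, mem_lowerPolar_iff]
  exact ⟨fun h x y hx hy => h x hx hy, fun h x hx y hy => h x y hx hy⟩

end MaximalEPreserving

section FiltersIdeals

variable {L : Type*} [Lattice L]

lemma isLatFilter_Ici (a : L) : IsLatFilter L (Set.Ici a) :=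
  ⟨⟨a, le_rfl⟩, fun _ _ hx hxy => le_trans hx hxy, fun _ _ => le_inf⟩

lemma isLatIdeal_Iic (a : L) : IsLatIdeal L (Set.Iic a) :=
  ⟨⟨a, le_rfl⟩, fun _ _ hx hyx => le_trans hyx hx, fun _ _ => sup_le⟩

variable [BoundedOrder L] {g : PMap L} {A B F I : Set L}

def genFilter (A : Set L) : Set L := {x | ∃ s : Finset L, ↑s ⊆ A ∧ s.inf id ≤ x}

def genIdeal (B : Set L) : Set L := {x | ∃ t : Finset L, ↑t ⊆ B ∧ x ≤ t.sup id}

lemma isLatFilter_genFilter (A : Set L) : IsLatFilter L (genFilter A) := by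
  refine ⟨⟨⊤, ∅, by simp, le_top⟩, fun x y ⟨s, hs, hsx⟩ hxy => ⟨s, hs, hsx.trans hxy⟩, ?_⟩
  rintro x y ⟨s, hs, hsx⟩ ⟨s', hs', hs'y⟩
  refine ⟨s ∪ s', by simpa using ⟨hs, hs'⟩, ?_⟩
  rw [Finset.inf_union]
  exact inf_le_inf hsx hs'y

lemma isLatIdeal_genIdeal (B : Set L) : IsLatIdeal L (genIdeal B) := by
  refine ⟨⟨⊥, ∅, by simp, bot_le⟩, fun x y ⟨t, ht, hxt⟩ hyx => ⟨t, ht, hyx.trans hxt⟩, ?_⟩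
  rintro x y ⟨t, ht, hxt⟩ ⟨t', ht', hyt'⟩
  refine ⟨t ∪ t', by simpa using ⟨ht, ht'⟩, ?_⟩
  rw [Finset.sup_union]
  exact sup_le_sup hxt hyt'

lemma subset_genFilter (A : Set L) : A ⊆ genFilter A :=
  fun a ha => ⟨{a}, by simpa using ha, by simp⟩

lemma subset_genIdeal (B : Set L) : B ⊆ genIdeal B :=
  fun b hb => ⟨{b}, by simpa using hb, by simp⟩

lemma disjoint_genFilter_genIdeal_iff :
    Disjoint (genFilter A) (genIdeal B) ↔
      ∀ s t : Finset L, ↑s ⊆ A → ↑t ⊆ B → ¬ s.inf id ≤ t.sup id := by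
  refine ⟨fun h s t hs ht hst => Set.disjoint_left.1 h ⟨s, hs, le_rfl⟩ ⟨t, ht, hst⟩, ?_⟩
  refine fun h => Set.disjoint_left.2 ?_
  rintro x ⟨s, hs, hsx⟩ ⟨t, ht, hxt⟩
  exact h s t hs ht (hsx.trans hxt)

lemma PHom.not_le (hg : PHom L g) {u v : L} (hu : u ∈ pre1 g) (hv : v ∈ pre0 g) : ¬ u ≤ v := by
  intro huv
  have h := (hg.2.2 hu hv).2
  rw [sup_eq_right.2 huv, show g v = some false from hv] at h
  simp at h

lemma PHom.disjoint_genFilter_genIdeal (hg : PHom L g) (hA : A ⊆ pre1 g) (hB : B ⊆ pre0 g) :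
    Disjoint (genFilter A) (genIdeal B) := by
  refine disjoint_genFilter_genIdeal_iff.2 fun s t hs ht => hg.not_le ?_ ?_
  · exact Finset.inf_induction hg.2.1
      (fun a ha b hb => show g (a ⊓ b) = _ by simpa using (hg.2.2 ha hb).1) fun a has => hA (hs has)
  · exact Finset.sup_induction hg.1
      (fun a ha b hb => show g (a ⊔ b) = _ by simpa using (hg.2.2 ha hb).2) fun b hbt => hB (ht hbt)

lemma pHom_pairMap (hF : IsLatFilter L F) (hI : IsLatIdeal L I) (hFI : Disjoint F I) :
    PHom L (pairMap F I) := by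
  obtain ⟨⟨x, hx⟩, hF_up, hF_inf⟩ := hF
  obtain ⟨⟨y, hy⟩, hI_down, hI_sup⟩ := hI
  have mem_pre1 : ∀ {a}, a ∈ F ↔ pairMap F I a = some true := fun {a} =>
    (Set.ext_iff.1 (pre1_pairMap F I) a).symm
  have mem_pre0 : ∀ {a}, a ∈ I ↔ pairMap F I a = some false := fun {a} =>
    (Set.ext_iff.1 (pre0_pairMap hFI) a).symm
  refine ⟨mem_pre0.1 (hI_down hy bot_le), mem_pre1.1 (hF_up hx le_top), ?_⟩
  intro a b p q ha hb
  cases p <;> cases q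
  · exact ⟨mem_pre0.1 (hI_down (mem_pre0.2 ha) inf_le_left),
      mem_pre0.1 (hI_sup (mem_pre0.2 ha) (mem_pre0.2 hb))⟩
  · exact ⟨mem_pre0.1 (hI_down (mem_pre0.2 ha) inf_le_left),
      mem_pre1.1 (hF_up (mem_pre1.2 hb) le_sup_right)⟩
  · exact ⟨mem_pre0.1 (hI_down (mem_pre0.2 hb) inf_le_right),
      mem_pre1.1 (hF_up (mem_pre1.2 ha) le_sup_left)⟩
  · exact ⟨mem_pre1.1 (hF_inf (mem_pre1.2 ha) (mem_pre1.2 hb)),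
      mem_pre1.1 (hF_up (mem_pre1.2 ha) le_sup_left)⟩

end FiltersIdeals

section MaximalPartialHoms

variable {L : Type*} [Lattice L] [BoundedOrder L] {g : PMap L} {A B F I : Set L}

lemma PHom.chainUnion {C : Set (PMap L)} (hC : IsChain (fun φ ψ => PExt ψ φ) C)
    (hne : C.Nonempty) (hph : ∀ φ ∈ C, PHom L φ) : PHom L (chainUnion C) := by
  obtain ⟨φ, hφ⟩ := hne
  refine ⟨pExt_chainUnion hC hφ (hph φ hφ).1, pExt_chainUnion hC hφ (hph φ hφ).2.1, ?_⟩
  intro a b x y ha hb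
  obtain ⟨φa, hφa, ha⟩ := exists_of_chainUnion_eq_some hC ha
  obtain ⟨φb, hφb, hb⟩ := exists_of_chainUnion_eq_some hC hb
  obtain ⟨ψ, hψ, haψ, hbψ⟩ : ∃ ψ ∈ C, ψ a = some x ∧ ψ b = some y := by
    rcases eq_or_ne φa φb with rfl | hne
    · exact ⟨φa, hφa, ha, hb⟩
    rcases hC hφa hφb hne with h | h
    · exact ⟨φb, hφb, h ha, hb⟩
    · exact ⟨φa, hφa, ha, h hb⟩
  exact ((hph ψ hψ).2.2 haψ hbψ).imp (pExt_chainUnion hC hψ ·) (pExt_chainUnion hC hψ ·)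

lemma exists_mem_MPHset_pExt {f : PMap L} (hf : PHom L f) : ∃ g ∈ MPHset L, PExt g f := by
  let Ext := {g : PMap L // PHom L g ∧ PExt g f}
  have : Nonempty Ext := ⟨⟨f, hf, PExt.refl f⟩⟩
  obtain ⟨m, hm⟩ :=
    exists_maximal_of_nonempty_chains_bounded (r := fun g h : Ext => PExt h.1 g.1)
    (fun C hC hne =>
      have hC' := hC.image_of_map_rel _ (fun φ ψ => PExt ψ φ) Subtype.val (fun _ _ h => h)
      ⟨⟨_, PHom.chainUnion hC' (hne.image _) (by rintro _ ⟨g, -, rfl⟩; exact g.2.1),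
          (pExt_chainUnion hC' ⟨_, hne.some_mem, rfl⟩).trans hne.some.2.2⟩,
        fun g hg => pExt_chainUnion hC' ⟨g, hg, rfl⟩⟩)
    (fun h₁ h₂ => h₂.trans h₁)
  exact ⟨m.1, ⟨m.2.1, fun h hh hext => hext.antisymm (hm ⟨h, hh, hext.trans m.2.2⟩ hext)⟩,
    m.2.2⟩

lemma exists_mem_MPHset_of_disjoint (hF : IsLatFilter L F) (hI : IsLatIdeal L I)
    (hFI : Disjoint F I) : ∃ g ∈ MPHset L, F ⊆ pre1 g ∧ I ⊆ pre0 g := by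
  obtain ⟨g, hg, hext⟩ := exists_mem_MPHset_pExt (pHom_pairMap hF hI hFI)
  rw [pExt_iff, pre1_pairMap, pre0_pairMap hFI] at hext
  exact ⟨g, hg, hext⟩

lemma genFilter_pre1_eq_and_genIdeal_pre0_eq (hg : g ∈ MPHset L) :
    genFilter (pre1 g) = pre1 g ∧ genIdeal (pre0 g) = pre0 g := by
  have hdisj := hg.1.disjoint_genFilter_genIdeal subset_rfl subset_rfl
  have hsat := hg.2 _ (pHom_pairMap (isLatFilter_genFilter _) (isLatIdeal_genIdeal _) hdisj)
    (pExt_iff.2 ⟨by rw [pre1_pairMap]; exact subset_genFilter _,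
      by rw [pre0_pairMap hdisj]; exact subset_genIdeal _⟩)
  have h₁ := pre1_pairMap (genFilter (pre1 g)) (genIdeal (pre0 g))
  have h₀ := pre0_pairMap hdisj
  rw [hsat] at h₁ h₀
  exact ⟨h₁.symm, h₀.symm⟩

lemma isLatFilter_pre1 (hg : g ∈ MPHset L) : IsLatFilter L (pre1 g) :=
  (genFilter_pre1_eq_and_genIdeal_pre0_eq hg).1 ▸ isLatFilter_genFilter _

lemma isLatIdeal_pre0 (hg : g ∈ MPHset L) : IsLatIdeal L (pre0 g) :=
  (genFilter_pre1_eq_and_genIdeal_pre0_eq hg).2 ▸ isLatIdeal_genIdeal _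

lemma exists_mem_MPHset_separating_iff :
    (∃ g ∈ MPHset L, A ⊆ pre1 g ∧ B ⊆ pre0 g) ↔
      ∀ s t : Finset L, ↑s ⊆ A → ↑t ⊆ B → ¬ s.inf id ≤ t.sup id := by
  rw [← disjoint_genFilter_genIdeal_iff]
  refine ⟨fun ⟨g, hg, hA, hB⟩ => hg.1.disjoint_genFilter_genIdeal hA hB, fun h => ?_⟩
  obtain ⟨g, hg, hA, hB⟩ :=
    exists_mem_MPHset_of_disjoint (isLatFilter_genFilter A) (isLatIdeal_genIdeal B) h
  exact ⟨g, hg, (subset_genFilter A).trans hA, (subset_genIdeal B).trans hB⟩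

end MaximalPartialHoms

section Completion

variable {L : Type*} [Lattice L] [BoundedOrder L]

instance : Std.Refl (EM L) := ⟨fun f => erelP_iff.2 (disjoint_pre1_pre0 f.1)⟩

lemma ePres_evalM (a : L) : EPres (EM L) (evalM L a) := fun _ _ hxy _ _ hp hq => hxy hp hq

lemma upperPolar_pre1_evalM (a : L) :
    upperPolar (EM L)ᶜ (pre1 (evalM L a)) = pre0 (evalM L a) := by
  refine subset_antisymm (fun y hy => ?_) (ePres_iff.1 (ePres_evalM a))
  by_contra hya
  have hdisj : Disjoint (Set.Ici a) (pre0 y.1) :=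
    Set.disjoint_left.2 fun v hav hv => hya ((isLatIdeal_pre0 y.2).2.1 hv hav)
  obtain ⟨f, hf, hfa, hfy⟩ :=
    exists_mem_MPHset_of_disjoint (isLatFilter_Ici a) (isLatIdeal_pre0 y.2) hdisj
  exact @hy ⟨f, hf⟩ (hfa le_rfl)
    (erelP_iff.2 ((disjoint_pre1_pre0 f).mono_right hfy))

lemma lowerPolar_pre0_evalM (a : L) :
    lowerPolar (EM L)ᶜ (pre0 (evalM L a)) = pre1 (evalM L a) := by
  refine subset_antisymm (fun x hx => ?_)
    (subset_upperPolar_iff_subset_lowerPolar.1 (ePres_iff.1 (ePres_evalM a)))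
  by_contra hxa
  have hdisj : Disjoint (pre1 x.1) (Set.Iic a) :=
    Set.disjoint_left.2 fun u hu hua => hxa ((isLatFilter_pre1 x.2).2.1 hu hua)
  obtain ⟨h, hh, hxh, hha⟩ :=
    exists_mem_MPHset_of_disjoint (isLatFilter_pre1 x.2) (isLatIdeal_Iic a) hdisj
  exact @hx ⟨h, hh⟩ (hha le_rfl)
    (erelP_iff.2 ((disjoint_pre1_pre0 h).mono_left hxh))

lemma evalM_mem_MPE (a : L) : evalM L a ∈ MPE (EM L) :=
  mem_MPE_of_polar (upperPolar_pre1_evalM a) (lowerPolar_pre0_evalM a)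

def evalMPE (a : L) : MPE (EM L) := ⟨evalM L a, evalM_mem_MPE a⟩

lemma sInf_le_sSup_evalMPE_iff {A B : Set L} :
    MPE.completeLattice.le (MPE.completeLattice.sInf (evalMPE '' A))
        (MPE.completeLattice.sSup (evalMPE '' B)) ↔
      ¬ ∃ g ∈ MPHset L, A ⊆ pre1 g ∧ B ⊆ pre0 g := by
  simp only [MPE.sInf_le_sSup_iff, Set.forall_mem_image]
  constructor
  · rintro h ⟨g, hg, hA, hB⟩
    exact h ⟨g, hg⟩ ⟨g, hg⟩ hA hB (refl _)
  · rintro h x y hA hB hxy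
    obtain ⟨g, hg, hxg, hyg⟩ := exists_mem_MPHset_of_disjoint (isLatFilter_pre1 x.2)
      (isLatIdeal_pre0 y.2) (erelP_iff.1 hxy)
    exact h ⟨g, hg, fun a ha => hxg (hA ha), fun b hb => hyg (hB hb)⟩

end Completion

/-- **Compactness.** Let `L` be a bounded lattice, `X = D♭(L)`,
and `e : L → C(X) = MPE(X,2)` the embedding `a ↦ e_a`. If `A, B ⊆ L` satisfy
`⋀ e(A) ≤ ⋁ e(B)` in `C(X)`, then there are finite `A' ⊆ A`, `B' ⊆ B` with
`⋀ e(A') ≤ ⋁ e(B')`: the completion `(e, C(X))` is compact. -/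
theorem stmt_10 (L : Type*) [Lattice L] [BoundedOrder L] :
    ∃ inst : CompleteLattice (CX L),
      (∀ φ ψ : CX L, inst.le φ ψ ↔ pre1 φ.1 ⊆ pre1 ψ.1) ∧
      ∃ e : L → CX L,
        (∀ a : L, (e a).1 = evalM L a) ∧
        ∀ A B : Set L,
          inst.le (inst.sInf (e '' A)) (inst.sSup (e '' B)) →
          ∃ A' B' : Finset L, ↑A' ⊆ A ∧ ↑B' ⊆ B ∧
            inst.le (inst.sInf (e '' ↑A')) (inst.sSup (e '' ↑B')) := by
  refine ⟨MPE.completeLattice, fun φ ψ => MPE.le_iff, evalMPE, fun a => rfl, fun A B hAB => ?_⟩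
  obtain ⟨s, t, hsA, htB, hst⟩ : ∃ s t : Finset L, ↑s ⊆ A ∧ ↑t ⊆ B ∧ s.inf id ≤ t.sup id := by
    by_contra! h
    exact sInf_le_sSup_evalMPE_iff.1 hAB (exists_mem_MPHset_separating_iff.2 h)
  refine ⟨s, t, hsA, htB, sInf_le_sSup_evalMPE_iff.2 fun hsep => ?_⟩
  exact exists_mem_MPHset_separating_iff.1 hsep s t subset_rfl subset_rfl hst

end CanExt
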